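/- Let d, D, q, K ∈ ℕ+ with 1 ≤ K ≤ q^d and let ε > 0. For every smoothness level s ∈ ℕ+ and every set of vectors β_1,…,β_K ∈ ℝ^D that are ε-separated (‖β_i − β_j‖ ≥ ε for i ≠ j), and every K-combinatorial symmetry 𝒮 at scale q, there exists a function f : ℝ^d → ℝ^D which is (ε,𝒮)-symmetric at scale q, such that (i) f has all continuous partial derivatives up to order s but not up to order s+1 (f ∈ C^s(ℝ^d,ℝ^D) \ C^{s+1}(ℝ^d,ℝ^D)), and (ii) the image of the cube midpoints under f is exactly {β_1,…,β_K}, i.e. f({Q̄ : Q ∈ 𝒬}) = {β_k}_{k=1}^K. -/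

import Mathlib

/-!
Statement 1 (Proposition: Construction of Symmetric Functions with Prescribed
Smoothness and Values).  For `d, D, q, K ∈ ℕ+` with `K ≤ q^d`, `ε > 0`, any
smoothness level `s ∈ ℕ+`, any `ε`-separated vectors `β_1,…,β_K ∈ ℝ^D`, and any
`K`-combinatorial symmetry `𝒮` at scale `q`, there is an `(ε,𝒮)`-symmetric
function `f : ℝ^d → ℝ^D` that is `C^s` but not `C^{s+1}` and whose image of the
cube midpoints equals `{β_1,…,β_K}`.
(The codomain `Fin D → ℝ` carries the sup-norm `‖·‖ = ‖·‖_∞`.)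
-/

noncomputable section

/-- The midpoint `Q̄` of the cube of the scale-`q` partition of `[0,1]^d`
indexed by the multi-index `i`. -/
def cubeMid (q d : ℕ) (i : Fin d → Fin q) : Fin d → ℝ :=
  fun k => (2 * (i k : ℝ) + 1) / (2 * q)


/-- the ramp power `t ↦ max t 0 ^ n` -/
def rampPow (n : ℕ) (t : ℝ) : ℝ := max t 0 ^ n

lemma rampPow_nonpos {n : ℕ} (hn : 0 < n) {t : ℝ} (ht : t ≤ 0) : rampPow n t = 0 := by
  simp [rampPow, max_eq_right ht, zero_pow hn.ne']

lemma rampPow_hasDerivAt {n : ℕ} (hn : 1 ≤ n) (t : ℝ) :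
    HasDerivAt (rampPow (n + 1)) ((n + 1) * rampPow n t) t := by
  rcases lt_trichotomy t 0 with h | h | h
  · have : rampPow n t = 0 := rampPow_nonpos (by omega) h.le
    rw [this, mul_zero]
    have he : rampPow (n+1) =ᶠ[nhds t] fun _ => (0:ℝ) := by
      filter_upwards [Iio_mem_nhds h] with x hx
      exact rampPow_nonpos (by omega) (le_of_lt hx)
    exact (hasDerivAt_const t 0).congr_of_eventuallyEq he
  · subst h
    have : rampPow n 0 = 0 := rampPow_nonpos (by omega) le_rfl
    rw [this, mul_zero]
    rw [hasDerivAt_iff_isLittleO]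
    have h0 : rampPow (n+1) 0 = 0 := rampPow_nonpos (by omega) le_rfl
    simp only [sub_zero, smul_zero, sub_zero, h0]
    have h1 : (fun x : ℝ => rampPow (n+1) x) =O[nhds 0] fun x : ℝ => x ^ (n+1) := by
      apply Asymptotics.IsBigO.of_bound 1
      filter_upwards with x
      simp only [one_mul, rampPow, norm_pow]
      gcongr
      rw [Real.norm_eq_abs, Real.norm_eq_abs, abs_le]
      constructor
      · exact neg_abs_le x |>.trans (le_max_left x 0)
      · rcases le_or_gt x 0 with hx | hx
        · simp [max_eq_right hx, abs_nonneg]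
        · simp [max_eq_left hx.le, le_abs_self]
    exact h1.trans_isLittleO (Asymptotics.isLittleO_pow_id (by omega))
  · have he : rampPow (n+1) =ᶠ[nhds t] fun x => x ^ (n+1) := by
      filter_upwards [Ioi_mem_nhds h] with x hx
      simp [rampPow, max_eq_left (le_of_lt (Set.mem_Ioi.mp hx))]
    have : rampPow n t = t ^ n := by simp [rampPow, max_eq_left h.le]
    rw [this]
    have hd := (hasDerivAt_pow (n+1) t).congr_of_eventuallyEq he
    exact hd.congr_deriv (by push_cast; ring)

lemma rampPow_deriv {n : ℕ} (hn : 1 ≤ n) :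
    deriv (rampPow (n + 1)) = fun t => (n + 1) * rampPow n t := by
  ext t; exact (rampPow_hasDerivAt hn t).deriv

lemma rampPow_contDiff {n : ℕ} (hn : 1 ≤ n) : ContDiff ℝ n (rampPow (n + 1)) := by
  induction n, hn using Nat.le_induction with
  | base =>
    rw [show ((1:ℕ) : WithTop ℕ∞) = 1 from rfl, contDiff_one_iff_deriv]
    refine ⟨fun t => (rampPow_hasDerivAt le_rfl t).differentiableAt, ?_⟩
    rw [rampPow_deriv le_rfl]
    exact (continuous_const.mul (((continuous_id.max continuous_const)).pow 1))
  | succ m hm ih =>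
    have : ((m + 1 : ℕ) : WithTop ℕ∞) = (m : WithTop ℕ∞) + 1 := by push_cast; ring
    rw [this, contDiff_succ_iff_deriv]
    refine ⟨fun t => (rampPow_hasDerivAt (by omega) t).differentiableAt, by simp, ?_⟩
    rw [rampPow_deriv (by omega)]
    exact contDiff_const.mul ih

lemma rampPow_one_not_diff : ¬ DifferentiableAt ℝ (rampPow 1) 0 := by
  intro h
  apply not_differentiableAt_abs_zero
  have : (abs : ℝ → ℝ) = fun t => 2 * rampPow 1 t - t := by
    ext t
    rcases le_or_gt t 0 with ht | ht
    · simp [rampPow, max_eq_right ht, abs_of_nonpos ht]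
    · simp [rampPow, max_eq_left ht.le, abs_of_pos ht]; ring
  rw [this]
  exact ((h.const_mul 2).sub differentiableAt_fun_id)

lemma rampPow_not_contDiff {n : ℕ} (hn : 1 ≤ n) :
    ¬ ContDiff ℝ (n + 1) (rampPow (n + 1)) := by
  induction n, hn using Nat.le_induction with
  | base =>
    intro h
    have : ((1:ℕ) + 1 : WithTop ℕ∞) = (1 : WithTop ℕ∞) + 1 := by norm_num
    rw [show ((1:ℕ) : WithTop ℕ∞) + 1 = (1:WithTop ℕ∞) + 1 from rfl] at h
    have h2 := (contDiff_succ_iff_deriv.mp h).2.2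
    rw [rampPow_deriv le_rfl] at h2
    simp only [Nat.cast_one] at h2
    have h3 : Differentiable ℝ (fun t => (1+1 : ℝ) * rampPow 1 t) := h2.differentiable one_ne_zero
    have h4 : DifferentiableAt ℝ (rampPow 1) 0 := by
      have := (h3 0).const_mul ((1:ℝ)/2)
      simp only [← mul_assoc] at this
      norm_num at this
      exact this
    exact rampPow_one_not_diff h4
  | succ m hm ih =>
    intro h
    apply ih
    have : ((m + 1 : ℕ) : WithTop ℕ∞) + 1 = ((m:ℕ) + 1 : WithTop ℕ∞) + 1 := by push_cast; ring
    rw [this] at h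
    have h2 := (contDiff_succ_iff_deriv.mp h).2.2
    rw [rampPow_deriv (by omega)] at h2
    have h3 : ContDiff ℝ ((m:ℕ)+1) (fun t => ((1:ℝ)/((m:ℝ)+1+1)) * ((((m:ℕ)+1 : ℕ):ℝ) + 1) * rampPow (m+1) t) := by
      simp only [mul_assoc]
      exact contDiff_const.mul h2
    have hne : ((m:ℝ) + 1 + 1) ≠ 0 := by positivity
    have hc : ((1:ℝ)/((m:ℝ)+1+1)) * ((((m:ℕ)+1 : ℕ):ℝ) + 1) = 1 := by
      push_cast; field_simp
    rw [hc] at h3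
    simp only [one_mul] at h3
    exact_mod_cast h3

theorem statement1
    (d D q K : ℕ) (hd : 0 < d) (hD : 0 < D) (hq : 0 < q) (hK : 0 < K)
    (hKq : K ≤ q ^ d) (ε : ℝ) (hε : 0 < ε) (s : ℕ) (hs : 0 < s)
    -- the prescribed `ε`-separated values
    (β : Fin K → (Fin D → ℝ))
    (hsep : ∀ i j : Fin K, i ≠ j → ε ≤ ‖β i - β j‖)
    -- a `K`-combinatorial symmetry at scale `q`
    (𝒮 : (Fin d → Fin q) → Fin K) (h𝒮 : Function.Surjective 𝒮) :
    ∃ f : (Fin d → ℝ) → (Fin D → ℝ),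
      -- (ε,𝒮)-symmetric at scale q: equal values within a symmetry class …
      (∀ i j : Fin d → Fin q, 𝒮 i = 𝒮 j → f (cubeMid q d i) = f (cubeMid q d j)) ∧
      -- … and ε-separation across distinct classes (sup-norm)
      (∀ i j : Fin d → Fin q, 𝒮 i ≠ 𝒮 j → ε ≤ ‖f (cubeMid q d i) - f (cubeMid q d j)‖) ∧
      -- prescribed smoothness: `C^s` but not `C^{s+1}`
      ContDiff ℝ s f ∧ ¬ ContDiff ℝ (s + 1) f ∧
      -- prescribed range on the cube midpoints
      f '' {x | ∃ i : Fin d → Fin q, x = cubeMid q d i} = Set.range β := by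
  have hq' : (0:ℝ) < q := by exact_mod_cast hq
  -- distance between distinct midpoints
  have hdist : ∀ i j : Fin d → Fin q, i ≠ j →
      1 / (q:ℝ) ≤ dist (cubeMid q d j) (cubeMid q d i) := by
    intro i j hij
    obtain ⟨k, hk⟩ := Function.ne_iff.mp hij
    have h1 : dist (cubeMid q d j k) (cubeMid q d i k) ≤ dist (cubeMid q d j) (cubeMid q d i) :=
      dist_le_pi_dist _ _ k
    refine le_trans ?_ h1
    rw [Real.dist_eq]
    have : cubeMid q d j k - cubeMid q d i k = ((j k : ℝ) - (i k : ℝ)) / q := by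
      simp only [cubeMid]
      field_simp
      ring
    rw [this, abs_div, abs_of_pos hq', div_le_div_iff_of_pos_right hq']
    have : (j k : ℝ) ≠ (i k : ℝ) := by
      exact_mod_cast fun h => hk.symm (Fin.ext (by exact_mod_cast h))
    have h2 : (1:ℤ) ≤ |(j k : ℤ) - (i k : ℤ)| := by
      have hne : (j k : ℤ) ≠ (i k : ℤ) := by
        exact_mod_cast fun h => hk.symm (Fin.ext (by exact_mod_cast h))
      exact Int.one_le_abs (sub_ne_zero.mpr hne)
    calc (1:ℝ) ≤ |((j k : ℤ) : ℝ) - ((i k : ℤ) : ℝ)| := by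
            rw [show ((j k : ℤ) : ℝ) - ((i k : ℤ) : ℝ) = (((j k : ℤ) - (i k : ℤ) : ℤ) : ℝ) by push_cast; ring]
            rw [← Int.cast_abs]
            exact_mod_cast h2
      _ = |(j k : ℝ) - (i k : ℝ)| := by norm_num
  -- bump functions
  let φ : (i : Fin d → Fin q) → ContDiffBump (cubeMid q d i) := fun i =>
    ⟨1 / (3*q), 1 / (2*q), by positivity, by
      apply div_lt_div_of_pos_left one_pos (by positivity); nlinarith⟩
  let P : (Fin d → ℝ) → (Fin D → ℝ) := fun x => ∑ i : Fin d → Fin q, φ i x • β (𝒮 i)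
  have hPval : ∀ i : Fin d → Fin q, P (cubeMid q d i) = β (𝒮 i) := by
    intro j
    have hsum := Finset.sum_eq_single (s := Finset.univ)
      (f := fun i => φ i (cubeMid q d j) • β (𝒮 i)) j
      (fun i _ hij => by
        have h0 : φ i (cubeMid q d j) = 0 := by
          apply (φ i).zero_of_le_dist
          refine le_trans ?_ (hdist i j hij)
          show (1:ℝ)/(2*q) ≤ 1/q
          apply div_le_div_of_nonneg_left one_pos.le hq'
          nlinarith
        show φ i (cubeMid q d j) • β (𝒮 i) = 0
        rw [h0, zero_smul])
      (fun h => absurd (Finset.mem_univ j) h)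
    show (∑ i : Fin d → Fin q, φ i (cubeMid q d j) • β (𝒮 i)) = β (𝒮 j)
    rw [hsum]
    have h1 : φ j (cubeMid q d j) = 1 :=
      (φ j).one_of_mem_closedBall (by rw [Metric.mem_closedBall, dist_self]; positivity)
    simp [h1]
  have k0 : Fin d := ⟨0, hd⟩
  have j0 : Fin D := ⟨0, hD⟩
  set g : (Fin d → ℝ) → ℝ := fun x => rampPow (s+1) (x k0 - 2) with hg
  let f : (Fin d → ℝ) → (Fin D → ℝ) := fun x => P x + g x • (fun _ => (1:ℝ))
  have hmidlt : ∀ i : Fin d → Fin q, cubeMid q d i k0 - 2 ≤ 0 := by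
    intro i
    have : (i k0 : ℝ) < q := by exact_mod_cast (i k0).2
    have hq1 : (1:ℝ) ≤ q := by exact_mod_cast hq
    have h1 : cubeMid q d i k0 ≤ 2 := by
      rw [cubeMid, div_le_iff₀ (by positivity)]
      nlinarith
    linarith
  have hfval : ∀ i : Fin d → Fin q, f (cubeMid q d i) = β (𝒮 i) := by
    intro i
    show P _ + _ • _ = _
    rw [hPval i, hg]
    simp [rampPow_nonpos (Nat.succ_pos s) (hmidlt i)]
  refine ⟨f, ?_, ?_, ?_, ?_, ?_⟩
  · intro i j hij; rw [hfval i, hfval j, hij]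
  · intro i j hij; rw [hfval i, hfval j]; exact hsep _ _ hij
  · -- C^s
    have hP : ContDiff ℝ s P := by
      apply ContDiff.sum
      intro i _
      exact ((φ i).contDiff).smul contDiff_const
    have hgc : ContDiff ℝ s g := by
      refine (rampPow_contDiff hs).comp ?_
      exact ((ContinuousLinearMap.proj (R := ℝ) (φ := fun _ : Fin d => ℝ) k0).contDiff).sub
        contDiff_const
    exact hP.add (hgc.smul contDiff_const)
  · -- not C^(s+1)
    intro h
    have hP : ContDiff ℝ (s+1) P := by
      apply ContDiff.sum
      intro i _
      exact ((φ i).contDiff).smul contDiff_const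
    have h1 : ContDiff ℝ (s+1) (fun x : Fin d → ℝ => g x • (fun _ : Fin D => (1:ℝ))) := by
      have := h.sub hP
      convert this using 2 with x
      show g x • _ = f x - P x
      simp [f]
    have h2 : ContDiff ℝ (s+1) (fun x : Fin d → ℝ => g x) := by
      have := (ContinuousLinearMap.proj (R := ℝ) (φ := fun _ : Fin D => ℝ) j0).contDiff.comp h1
      convert this using 2 with x
      simp [ContinuousLinearMap.proj_apply]
    have h3 : ContDiff ℝ (s+1) (rampPow (s+1)) := by
      have hι : ContDiff ℝ (s+1) (fun t : ℝ => (fun _ : Fin d => t + 2)) :=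
        contDiff_pi.mpr fun _ => contDiff_id.add contDiff_const
      have hcomp := h2.comp hι
      have heq : rampPow (s+1) = (fun x : Fin d → ℝ => g x) ∘ (fun t : ℝ => (fun _ : Fin d => t + 2)) := by
        funext t
        simp [hg]
      rw [heq]
      exact hcomp
    exact rampPow_not_contDiff hs h3
  · -- image
    ext y
    simp only [Set.mem_image, Set.mem_setOf_eq, Set.mem_range]
    constructor
    · rintro ⟨x, ⟨i, rfl⟩, rfl⟩
      exact ⟨𝒮 i, (hfval i).symm⟩
    · rintro ⟨k, rfl⟩
      obtain ⟨i, rfl⟩ := h𝒮 k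
      exact ⟨cubeMid q d i, ⟨i, rfl⟩, hfval i⟩


end
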